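/- Grafted models preserve truth at the grafted points: let (M, s_0) be the pointed model grafted from a nonempty family of pointed general concurrent game models {(M_i, s_i) | i ∈ I} (with pairwise disjoint state sets and pairwise disjoint action sets), a satisfiable elementary conjunction γ, and a general game form F whose new state s_0 occurs in no M_i, whose set of outcome states is S = {s_i | i ∈ I}, and whose action set is disjoint from each action set of the M_i. Then M is a general concurrent game model, and for every i ∈ I and every formula φ of the language Φ, M_i, s_i ⊨ φ if and only if M, s_i ⊨ φ. -/

import Mathlib

open scoped Classical

/-- A joint action of a coalition `A`: an assignment of an action to each agent in `A`. -/
def JA (Agent Action : Type) (A : Set Agent) : Type :=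
  (a : Agent) → a ∈ A → Action

namespace JA

variable {Agent Action : Type}

/-- The restriction `σ|_B` of a joint action of `A` to a subcoalition `B ⊆ A`. -/
def restrict {A B : Set Agent} (h : B ⊆ A) (σ : JA Agent Action A) : JA Agent Action B :=
  fun a ha => σ a (h ha)

/-- The union `σ_A ∪ σ_B` of joint actions of coalitions `A` and `B`. -/
noncomputable def union {A B : Set Agent} (σA : JA Agent Action A) (σB : JA Agent Action B) :
    JA Agent Action (A ∪ B) :=
  fun a ha =>
    if h : a ∈ A then σA a h else σB a ((show a ∈ A ∨ a ∈ B from ha).resolve_left h)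

/-- Transport of a joint action along an equality of coalitions. -/
def cast {A B : Set Agent} (h : A = B) (σ : JA Agent Action A) : JA Agent Action B :=
  fun a ha => σ a (by rw [h]; exact ha)

end JA

/-- An abstract multi-agent action model. -/
structure AMAM (Agent AP : Type) : Type 1 where
  State : Type
  Action : Type
  state_nonempty : Nonempty State
  action_nonempty : Nonempty Action
  av : (A : Set Agent) → State → Set (JA Agent Action A)
  out : (A : Set Agent) → State → JA Agent Action A → Set State
  lab : State → Set AP

/-- `⊕{Sa(a) | a ∈ A}`: merge of a family of sets of joint actions of singleton coalitions,
indexed by the agents in `A`: the set of joint actions of `A` obtained as unions `⋃_{a∈A} f(a)`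
over choice functions `f` with `f(a) ∈ Sa(a)`. -/
def oplusSingle {Agent Action : Type} (A : Set Agent)
    (Sa : (a : Agent) → Set (JA Agent Action ({a} : Set Agent))) :
    Set (JA Agent Action A) :=
  {σ | ∃ f : (a : Agent) → a ∈ A → JA Agent Action ({a} : Set Agent),
        (∀ (a : Agent) (ha : a ∈ A), f a ha ∈ Sa a) ∧
        (∀ (a : Agent) (ha : a ∈ A), σ a ha = f a ha a rfl)}

/-- A concurrent game model. -/
structure IsCGM {Agent AP : Type} (M : AMAM Agent AP) : Prop where
  av_agent_nonempty : ∀ (a : Agent) (s : M.State), (M.av {a} s).Nonempty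
  av_oplus : ∀ (A : Set Agent) (s : M.State),
    M.av A s = oplusSingle A (fun a => M.av {a} s)
  out_det : ∀ (s : M.State) (σ : JA Agent M.Action (Set.univ : Set Agent)),
    (σ ∈ M.av Set.univ s → ∃ t : M.State, M.out Set.univ s σ = {t}) ∧
    (σ ∉ M.av Set.univ s → M.out Set.univ s σ = ∅)
  out_union : ∀ (A : Set Agent) (s : M.State) (σ : JA Agent M.Action A),
    M.out A s σ = {t | ∃ σG : JA Agent M.Action (Set.univ : Set Agent),
      JA.restrict (Set.subset_univ A) σG = σ ∧ t ∈ M.out Set.univ s σG}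

/-- A general concurrent game model. -/
structure IsGCGM {Agent AP : Type} (M : AMAM Agent AP) : Prop where
  av_restrict : ∀ (A : Set Agent) (s : M.State),
    M.av A s = {σ | ∃ σG ∈ M.av Set.univ s, JA.restrict (Set.subset_univ A) σG = σ}
  av_grand : ∀ s : M.State,
    M.av Set.univ s = {σ | M.out Set.univ s σ ≠ ∅}
  out_union : ∀ (A : Set Agent) (s : M.State) (σ : JA Agent M.Action A),
    M.out A s σ = {t | ∃ σG : JA Agent M.Action (Set.univ : Set Agent),
      JA.restrict (Set.subset_univ A) σG = σ ∧ t ∈ M.out Set.univ s σG}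

/-- The language `Φ` of coalition logic. -/
inductive Formula (Agent AP : Type) : Type
  | top : Formula Agent AP
  | atom : AP → Formula Agent AP
  | neg : Formula Agent AP → Formula Agent AP
  | and : Formula Agent AP → Formula Agent AP → Formula Agent AP
  | coal : Set Agent → Formula Agent AP → Formula Agent AP

namespace Formula

variable {Agent AP : Type}

def bot : Formula Agent AP := .neg .top
def or (φ ψ : Formula Agent AP) : Formula Agent AP := .neg ((φ.neg).and (ψ.neg))
def imp (φ ψ : Formula Agent AP) : Formula Agent AP := (φ.neg).or ψ
def iff (φ ψ : Formula Agent AP) : Formula Agent AP := (φ.imp ψ).and (ψ.imp φ)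

/-- Modal depth. -/
def mdepth : Formula Agent AP → ℕ
  | .top => 0
  | .atom _ => 0
  | .neg φ => φ.mdepth
  | .and φ ψ => max φ.mdepth ψ.mdepth
  | .coal _ φ => φ.mdepth + 1

end Formula

/-- Satisfaction of a formula at a state of an abstract multi-agent action model. -/
def Sat {Agent AP : Type} (M : AMAM Agent AP) : M.State → Formula Agent AP → Prop
  | _, .top => True
  | s, .atom p => p ∈ M.lab s
  | s, .neg φ => ¬ Sat M s φ
  | s, .and φ ψ => Sat M s φ ∧ Sat M s ψ
  | s, .coal A φ => ∃ σ ∈ M.av A s, ∀ t ∈ M.out A s σ, Sat M t φ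

/-- CL-validity: truth at every state of every concurrent game model. -/
def CLValid {Agent AP : Type} (φ : Formula Agent AP) : Prop :=
  ∀ M : AMAM Agent AP, IsCGM M → ∀ s : M.State, Sat M s φ

/-- MCL-validity: truth at every state of every general concurrent game model. -/
def MCLValid {Agent AP : Type} (φ : Formula Agent AP) : Prop :=
  ∀ M : AMAM Agent AP, IsGCGM M → ∀ s : M.State, Sat M s φ

/-- Propositional evaluation of a formula under a valuation, treating coalition
formulas (and atoms) as propositional atoms. -/
def propEval {Agent AP : Type} (v : Formula Agent AP → Bool) : Formula Agent AP → Bool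
  | .top => true
  | .atom p => v (.atom p)
  | .neg φ => !(propEval v φ)
  | .and φ ψ => propEval v φ && propEval v ψ
  | .coal A φ => v (.coal A φ)

/-- `φ` is (an instance of) a propositional tautology. -/
def Tautology {Agent AP : Type} (φ : Formula Agent AP) : Prop :=
  ∀ v : Formula Agent AP → Bool, propEval v φ = true

/-- `φ` is propositionally satisfiable. -/
def PropSatisfiable {Agent AP : Type} (φ : Formula Agent AP) : Prop :=
  ∃ v : Formula Agent AP → Bool, propEval v φ = true

/-- Pauly's axiomatic system for Coalition Logic CL. -/
inductive PaulyCL {Agent AP : Type} : Formula Agent AP → Prop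
  | tau {φ : Formula Agent AP} : Tautology φ → PaulyCL φ
  | mon (A : Set Agent) (φ ψ : Formula Agent AP) :
      PaulyCL ((Formula.coal A (φ.and ψ)).imp (Formula.coal A φ))
  | live (A : Set Agent) : PaulyCL ((Formula.coal A Formula.bot).neg)
  | ser (A : Set Agent) : PaulyCL (Formula.coal A Formula.top)
  | ia {A B : Set Agent} (h : A ∩ B = ∅) (φ ψ : Formula Agent AP) :
      PaulyCL (((Formula.coal A φ).and (Formula.coal B ψ)).imp
        (Formula.coal (A ∪ B) (φ.and ψ)))
  | max (φ : Formula Agent AP) :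
      PaulyCL (((Formula.coal ∅ φ.neg).neg).imp (Formula.coal Set.univ φ))
  | mp {φ ψ : Formula Agent AP} : PaulyCL (φ.imp ψ) → PaulyCL φ → PaulyCL ψ
  | re {φ ψ : Formula Agent AP} (A : Set Agent) :
      PaulyCL (φ.iff ψ) → PaulyCL ((Formula.coal A φ).iff (Formula.coal A ψ))

/-- The alternative axiomatic system for Coalition Logic CL. -/
inductive AltCL {Agent AP : Type} : Formula Agent AP → Prop
  | tau {φ : Formula Agent AP} : Tautology φ → AltCL φ
  | mg (A : Set Agent) (φ ψ : Formula Agent AP) :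
      AltCL ((Formula.coal ∅ (φ.imp ψ)).imp ((Formula.coal A φ).imp (Formula.coal A ψ)))
  | mc {A B : Set Agent} (h : A ⊆ B) (φ : Formula Agent AP) :
      AltCL ((Formula.coal A φ).imp (Formula.coal B φ))
  | live (A : Set Agent) : AltCL ((Formula.coal A Formula.bot).neg)
  | ser (A : Set Agent) : AltCL (Formula.coal A Formula.top)
  | ia {A B : Set Agent} (h : A ∩ B = ∅) (φ ψ : Formula Agent AP) :
      AltCL (((Formula.coal A φ).and (Formula.coal B ψ)).imp
        (Formula.coal (A ∪ B) (φ.and ψ)))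
  | det (A : Set Agent) (φ ψ : Formula Agent AP) :
      AltCL ((Formula.coal A (φ.or ψ)).imp ((Formula.coal A φ).or (Formula.coal Set.univ ψ)))
  | mp {φ ψ : Formula Agent AP} : AltCL (φ.imp ψ) → AltCL φ → AltCL ψ
  | cn {φ : Formula Agent AP} (A : Set Agent) (ψ : Formula Agent AP) :
      AltCL φ → AltCL ((Formula.coal A ψ).imp (Formula.coal ∅ φ))

/-- The axiomatic system for Minimal Coalition Logic MCL. -/
inductive MCLProv {Agent AP : Type} : Formula Agent AP → Prop
  | tau {φ : Formula Agent AP} : Tautology φ → MCLProv φ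
  | mg (A : Set Agent) (φ ψ : Formula Agent AP) :
      MCLProv ((Formula.coal ∅ (φ.imp ψ)).imp ((Formula.coal A φ).imp (Formula.coal A ψ)))
  | mc {A B : Set Agent} (h : A ⊆ B) (φ : Formula Agent AP) :
      MCLProv ((Formula.coal A φ).imp (Formula.coal B φ))
  | live (A : Set Agent) : MCLProv ((Formula.coal A Formula.bot).neg)
  | mp {φ ψ : Formula Agent AP} : MCLProv (φ.imp ψ) → MCLProv φ → MCLProv ψ
  | cn {φ : Formula Agent AP} (A : Set Agent) (ψ : Formula Agent AP) :
      MCLProv φ → MCLProv ((Formula.coal A ψ).imp (Formula.coal ∅ φ))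

/-- Literals of classical propositional logic. -/
inductive IsLiteral {Agent AP : Type} : Formula Agent AP → Prop
  | pos (p : AP) : IsLiteral (Formula.atom p)
  | neg (p : AP) : IsLiteral ((Formula.atom p).neg)

/-- Elementary disjunctions: disjunctions of (possibly zero) literals. -/
inductive IsElemDisj {Agent AP : Type} : Formula Agent AP → Prop
  | bot : IsElemDisj Formula.bot
  | lit {φ : Formula Agent AP} : IsLiteral φ → IsElemDisj φ
  | disj {φ ψ : Formula Agent AP} : IsElemDisj φ → IsElemDisj ψ → IsElemDisj (φ.or ψ)

/-- Elementary conjunctions: conjunctions of (possibly zero) literals. -/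
inductive IsElemConj {Agent AP : Type} : Formula Agent AP → Prop
  | top : IsElemConj Formula.top
  | lit {φ : Formula Agent AP} : IsLiteral φ → IsElemConj φ
  | conj {φ ψ : Formula Agent AP} : IsElemConj φ → IsElemConj ψ → IsElemConj (φ.and ψ)

/-- Conjunction of a list of formulas. -/
def bigAnd {Agent AP : Type} : List (Formula Agent AP) → Formula Agent AP
  | [] => Formula.top
  | [φ] => φ
  | φ :: l => φ.and (bigAnd l)

/-- Disjunction of a list of formulas. -/
def bigOr {Agent AP : Type} : List (Formula Agent AP) → Formula Agent AP
  | [] => Formula.bot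
  | [φ] => φ
  | φ :: l => φ.or (bigOr l)

/-- The data of a standard formula
`γ ∨ (⋀_{i∈N} ⟨A_i⟩φ_i → ⋁_{j∈P} ⟨B_j⟩ψ_j)`. -/
structure StdFormula (Agent AP : Type) where
  γ : Formula Agent AP
  hγ : IsElemDisj γ
  n : ℕ
  m : ℕ
  hm : 0 < m
  A : Fin n → Set Agent
  φ : Fin n → Formula Agent AP
  B : Fin m → Set Agent
  ψ : Fin m → Formula Agent AP
  hN : n ≠ 0 → ∃ i : Fin n, A i = (∅ : Set Agent) ∧ φ i = Formula.top
  hP : ∃ j : Fin m, B j = (Set.univ : Set Agent) ∧ ψ j = Formula.bot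

/-- The standard formula determined by the data. -/
def StdFormula.toFormula {Agent AP : Type} (S : StdFormula Agent AP) : Formula Agent AP :=
  S.γ.or ((bigAnd (List.ofFn fun i => Formula.coal (S.A i) (S.φ i))).imp
      (bigOr (List.ofFn fun j => Formula.coal (S.B j) (S.ψ j))))

/-- `φ_{N0} = ⋀{φ_i | i ∈ N, A_i = ∅}`. -/
noncomputable def StdFormula.phiN0 {Agent AP : Type} (S : StdFormula Agent AP) :
    Formula Agent AP :=
  bigAnd (((List.finRange S.n).filter fun i => decide (S.A i = (∅ : Set Agent))).map S.φ)

/-- The atomic propositions that are conjuncts of a formula. -/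
def posAtoms {Agent AP : Type} : Formula Agent AP → Set AP
  | .atom p => {p}
  | .and φ ψ => posAtoms φ ∪ posAtoms ψ
  | _ => ∅

/-- A general game form with outcome states indexed by `ι`. -/
structure GameForm (Agent ι : Type) : Type 1 where
  Action0 : Type
  action_nonempty : Nonempty Action0
  outcome_nonempty : Nonempty ι
  av0 : (A : Set Agent) → Set (JA Agent Action0 A)
  out0 : (A : Set Agent) → JA Agent Action0 A → Set ι
  av0_restrict : ∀ A : Set Agent,
    av0 A = {σ | ∃ σG ∈ av0 Set.univ, JA.restrict (Set.subset_univ A) σG = σ}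
  av0_out : ∀ σ : JA Agent Action0 (Set.univ : Set Agent),
    σ ∈ av0 Set.univ ↔ out0 Set.univ σ ≠ ∅
  out0_union : ∀ (A : Set Agent) (σ : JA Agent Action0 A),
    out0 A σ = {j | ∃ σG : JA Agent Action0 (Set.univ : Set Agent),
      JA.restrict (Set.subset_univ A) σG = σ ∧ j ∈ out0 Set.univ σG}

/-- The model grafted from a family of pointed models `(Mi i, si i)`, an elementary
conjunction `γ`, and a general game form `F`.  The new state `s_0` is `none`; the states
of `Mi i` are embedded as `some ⟨i, ·⟩`; the actions of `F` and of the `Mi i` are kept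
disjoint via a sum type. -/
noncomputable def grafted {Agent AP ι : Type}
    (Mi : ι → AMAM Agent AP) (si : (i : ι) → (Mi i).State)
    (γ : Formula Agent AP) (F : GameForm Agent ι) : AMAM Agent AP where
  State := Option ((i : ι) × (Mi i).State)
  Action := F.Action0 ⊕ ((i : ι) × (Mi i).Action)
  state_nonempty := ⟨none⟩
  action_nonempty := ⟨Sum.inl (Classical.choice F.action_nonempty)⟩
  av := fun A s =>
    match s with
    | none => {σ | ∃ τ ∈ F.av0 A, σ = fun a ha => Sum.inl (τ a ha)}
    | some ⟨i, u⟩ => {σ | ∃ τ ∈ (Mi i).av A u, σ = fun a ha => Sum.inr ⟨i, τ a ha⟩}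
  out := fun A s σ =>
    match s with
    | none => {t | ∃ τ : JA Agent F.Action0 A,
        (σ = fun a ha => Sum.inl (τ a ha)) ∧ ∃ j ∈ F.out0 A τ, t = some ⟨j, si j⟩}
    | some ⟨i, u⟩ => {t | ∃ τ : JA Agent (Mi i).Action A,
        (σ = fun a ha => Sum.inr ⟨i, τ a ha⟩) ∧ ∃ u' ∈ (Mi i).out A u τ, t = some ⟨i, u'⟩}
  lab := fun s =>
    match s with
    | none => posAtoms γ
    | some ⟨i, u⟩ => (Mi i).lab u

/-! The conditions defining a general concurrent game model only involve one state at a time,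
and they survive renaming the actions and the outcome states along arbitrary maps. This makes
the grafted model a general concurrent game model. Moreover each `M_i` sits inside the grafted
model through an injective renaming of its actions, so its coalition moves, and with them the
truth of every formula, are reproduced exactly there. -/

section

variable {Agent AP : Type}

namespace JA

variable {Action Action' : Type} {A : Set Agent}

def map (e : Action → Action') (τ : JA Agent Action A) : JA Agent Action' A :=
  fun a ha => e (τ a ha)

lemma map_injective {e : Action → Action'} (he : Function.Injective e) :
    Function.Injective (map e : JA Agent Action A → JA Agent Action' A) :=
  fun _ _ h => funext₂ fun a ha => he (congrFun₂ h a ha)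

end JA

structure IsGeneralGame {Action T : Type} (av : (A : Set Agent) → Set (JA Agent Action A))
    (out : (A : Set Agent) → JA Agent Action A → Set T) : Prop where
  av_restrict : ∀ A : Set Agent,
    av A = {σ | ∃ σG ∈ av Set.univ, JA.restrict (Set.subset_univ A) σG = σ}
  av_grand : av Set.univ = {σ | out Set.univ σ ≠ ∅}
  out_union : ∀ (A : Set Agent) (σ : JA Agent Action A),
    out A σ = {t | ∃ σG : JA Agent Action Set.univ,
      JA.restrict (Set.subset_univ A) σG = σ ∧ t ∈ out Set.univ σG}

lemma isGCGM_iff (M : AMAM Agent AP) :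
    IsGCGM M ↔ ∀ s, IsGeneralGame (M.av · s) (M.out · s) :=
  ⟨fun h s => ⟨(h.av_restrict · s), h.av_grand s, (h.out_union · s)⟩,
    fun h => ⟨fun A s => (h s).av_restrict A, fun s => (h s).av_grand,
      fun A s => (h s).out_union A⟩⟩

lemma GameForm.isGeneralGame {ι : Type} (F : GameForm Agent ι) :
    IsGeneralGame F.av0 F.out0 :=
  ⟨F.av0_restrict, Set.ext F.av0_out, F.out0_union⟩

lemma IsGeneralGame.map {Action Action' T T' : Type}
    {av : (A : Set Agent) → Set (JA Agent Action A)}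
    {out : (A : Set Agent) → JA Agent Action A → Set T}
    (h : IsGeneralGame av out) (e : Action → Action') (f : T → T') :
    IsGeneralGame (fun A => {σ | ∃ τ ∈ av A, σ = τ.map e})
      (fun A σ => {t | ∃ τ, σ = τ.map e ∧ ∃ x ∈ out A τ, t = f x}) where
  av_restrict A := by
    ext σ
    simp only [h.av_restrict A, Set.mem_ofPred_eq]
    constructor
    · rintro ⟨_, ⟨τG, hτG, rfl⟩, rfl⟩
      exact ⟨τG.map e, ⟨τG, hτG, rfl⟩, rfl⟩
    · rintro ⟨_, ⟨τG, hτG, rfl⟩, rfl⟩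
      exact ⟨_, ⟨τG, hτG, rfl⟩, rfl⟩
  av_grand := by
    ext σ
    simp only [h.av_grand, Set.mem_ofPred_eq, ← Set.nonempty_iff_ne_empty]
    constructor
    · rintro ⟨τ, ⟨x, hx⟩, rfl⟩
      exact ⟨f x, τ, rfl, x, hx, rfl⟩
    · rintro ⟨_, τ, rfl, x, hx, rfl⟩
      exact ⟨τ, ⟨x, hx⟩, rfl⟩
  out_union A σ := by
    ext t
    simp only [h.out_union A, Set.mem_ofPred_eq]
    constructor
    · rintro ⟨_, rfl, x, ⟨τG, rfl, hx⟩, rfl⟩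
      exact ⟨τG.map e, rfl, τG, rfl, x, hx, rfl⟩
    · rintro ⟨_, rfl, τG, rfl, x, hx, rfl⟩
      exact ⟨_, rfl, x, ⟨τG, rfl, hx⟩, rfl⟩

structure AMAM.IsBoundedMorphism (M N : AMAM Agent AP) (g : M.State → N.State)
    (e : M.Action → N.Action) : Prop where
  lab_eq : ∀ u, N.lab (g u) = M.lab u
  av_eq : ∀ A u, N.av A (g u) = {σ | ∃ τ ∈ M.av A u, σ = τ.map e}
  out_map_eq : ∀ A u τ, N.out A (g u) (τ.map e) = g '' M.out A u τ

theorem AMAM.IsBoundedMorphism.sat_iff {M N : AMAM Agent AP} {g : M.State → N.State}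
    {e : M.Action → N.Action} (h : M.IsBoundedMorphism N g e) (φ : Formula Agent AP)
    (u : M.State) : Sat M u φ ↔ Sat N (g u) φ := by
  induction φ generalizing u with
  | top => exact Iff.rfl
  | atom p => exact (Set.ext_iff.1 (h.lab_eq u) p).symm
  | neg φ ih => exact not_congr (ih u)
  | and φ ψ ihφ ihψ => exact and_congr (ihφ u) (ihψ u)
  | coal A φ ih =>
    simp only [Sat, h.av_eq, Set.mem_ofPred_eq]
    constructor
    · rintro ⟨τ, hτ, hφ⟩
      refine ⟨τ.map e, ⟨τ, hτ, rfl⟩, ?_⟩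
      rw [h.out_map_eq]
      rintro _ ⟨u', hu', rfl⟩
      exact (ih u').1 (hφ u' hu')
    · rintro ⟨_, ⟨τ, hτ, rfl⟩, hφ⟩
      refine ⟨τ, hτ, fun u' hu' => (ih u').2 (hφ _ ?_)⟩
      rw [h.out_map_eq]
      exact Set.mem_image_of_mem g hu'

section Grafted

variable {ι : Type} (Mi : ι → AMAM Agent AP) (si : (i : ι) → (Mi i).State)
  (γ : Formula Agent AP) (F : GameForm Agent ι)

lemma grafted_isGCGM (hMi : ∀ i, IsGCGM (Mi i)) : IsGCGM (grafted Mi si γ F) :=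
  (isGCGM_iff _).2 fun
    | none => F.isGeneralGame.map _ fun j => (some ⟨j, si j⟩ : (grafted Mi si γ F).State)
    | some ⟨i, u⟩ => ((isGCGM_iff _).1 (hMi i) u).map
        (fun x => (Sum.inr ⟨i, x⟩ : (grafted Mi si γ F).Action))
        fun u' => (some ⟨i, u'⟩ : (grafted Mi si γ F).State)

lemma grafted_isBoundedMorphism (i : ι) :
    (Mi i).IsBoundedMorphism (grafted Mi si γ F) (fun u => some ⟨i, u⟩)
      (fun x => Sum.inr ⟨i, x⟩) where
  lab_eq _ := rfl
  av_eq _ _ := rfl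
  out_map_eq A u τ := by
    have he : Function.Injective (JA.map (A := A)
        (fun x => (Sum.inr ⟨i, x⟩ : F.Action0 ⊕ (j : ι) × (Mi j).Action))) :=
      JA.map_injective (Sum.inr_injective.comp sigma_mk_injective)
    ext t
    constructor
    · rintro ⟨τ', hτ', u', hu', rfl⟩
      obtain rfl : τ = τ' := he hτ'
      exact ⟨u', hu', rfl⟩
    · rintro ⟨u', hu', rfl⟩
      exact ⟨τ, rfl, u', hu', rfl⟩

end Grafted

end

theorem stmt19_general {Agent AP ι : Type}
    (Mi : ι → AMAM Agent AP) (hMi : ∀ i : ι, IsGCGM (Mi i))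
    (si : (i : ι) → (Mi i).State)
    (γ : Formula Agent AP)
    (F : GameForm Agent ι) :
    IsGCGM (grafted Mi si γ F) ∧
    ∀ (i : ι) (φ : Formula Agent AP),
      Sat (Mi i) (si i) φ ↔ Sat (grafted Mi si γ F) (some ⟨i, si i⟩) φ :=
  ⟨grafted_isGCGM Mi si γ F hMi, fun i φ => (grafted_isBoundedMorphism Mi si γ F i).sat_iff φ _⟩

/-- the grafted model is a general concurrent game model, and truth
is preserved at the grafted points. -/
theorem stmt19 {Agent AP ι : Type} [Fintype Agent] [Nonempty Agent] [Countable AP]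
    [Nonempty ι]
    (Mi : ι → AMAM Agent AP) (hMi : ∀ i : ι, IsGCGM (Mi i))
    (si : (i : ι) → (Mi i).State)
    (γ : Formula Agent AP) (hγ : IsElemConj γ) (hsat : PropSatisfiable γ)
    (F : GameForm Agent ι) :
    IsGCGM (grafted Mi si γ F) ∧
    ∀ (i : ι) (φ : Formula Agent AP),
      Sat (Mi i) (si i) φ ↔ Sat (grafted Mi si γ F) (some ⟨i, si i⟩) φ :=
  stmt19_general Mi hMi si γ F
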